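/- (Overflow part of Proposition 3; inequality (28).) Let P_Y be a binary target distribution, let E be a finite prefix-free set of binary strings each of length strictly greater than n, and let w : E → (0,∞) be weights. For v ∈ {0,1}^n, let S(v) = {c ∈ E : the first n symbols of c equal v} and W(v) = Σ_{c ∈ S(v)} w(c). Then Σ_{v ∈ {0,1}^n : W(v) > 0} W(v) log₂(W(v)/P_Y^n(v)) ≤ Σ_{c ∈ E} w(c) log₂(w(c)/P_Y^{ℓ(c)}(c)). -/

import Mathlib

/-- The probability `P_Y^{ℓ(L)}(L) = Π_i P_Y(L_i)` of a binary string `L`,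
where `P_Y(1) = p`, `P_Y(0) = 1 - p`. -/
noncomputable def pstr (p : ℝ) (L : List Bool) : ℝ :=
  (L.map fun b => if b then p else 1 - p).prod

/-- The weight on `{0,1}^n` of the overflow part: `W(v) = Σ_{c ∈ S(v)} w(c)`
where `S(v) = {c ∈ E : the first n symbols of c equal v}`. -/
noncomputable def overW (n : ℕ) (E : Finset (List Bool))
    (w : List Bool → ℝ) (v : Fin n → Bool) : ℝ :=
  ∑ c ∈ E, (if c.take n = List.ofFn v then w c else 0)



lemma pstr_nil (p : ℝ) : pstr p [] = 1 := by simp [pstr]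

lemma pstr_cons (p : ℝ) (b : Bool) (l : List Bool) :
    pstr p (b :: l) = (if b then p else 1 - p) * pstr p l := by simp [pstr]

lemma pstr_append (p : ℝ) (l₁ l₂ : List Bool) :
    pstr p (l₁ ++ l₂) = pstr p l₁ * pstr p l₂ := by simp [pstr]

lemma pstr_pos (p : ℝ) (hp0 : 0 < p) (hp1 : p < 1) (l : List Bool) : 0 < pstr p l := by
  induction l with
  | nil => simp [pstr_nil]
  | cons b t ih =>
      rw [pstr_cons]
      have : (0:ℝ) < if b then p else 1 - p := by cases b <;> simp [hp0] <;> linarith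
      positivity

lemma kraft (p : ℝ) (hp0 : 0 < p) (hp1 : p < 1) :
    ∀ N (F : Finset (List Bool)), (∀ c ∈ F, ∀ d ∈ F, c <+: d → c = d) →
    (∀ c ∈ F, c.length ≤ N) → ∑ c ∈ F, pstr p c ≤ 1 := by
  intro N
  induction N with
  | zero =>
      intro F hpf hlen
      have hF : F ⊆ {[]} := by
        intro c hc
        have := hlen c hc
        simp_all [List.length_eq_zero_iff]
      rcases Finset.subset_singleton_iff.1 hF with h | h <;> simp [h, pstr_nil]
  | succ N ih =>
      intro F hpf hlen
      by_cases hnil : ([] : List Bool) ∈ F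
      · have : F = {[]} := by
          apply Finset.eq_singleton_iff_unique_mem.2
          refine ⟨hnil, fun d hd => (hpf [] hnil d hd List.nil_prefix).symm⟩
        simp [this, pstr_nil]
      · classical
        have hsplit : ∑ c ∈ F, pstr p c =
            ∑ c ∈ F.filter (fun c => c.head? = some false), pstr p c +
            ∑ c ∈ F.filter (fun c => ¬ (c.head? = some false)), pstr p c :=
          (Finset.sum_filter_add_sum_filter_not F _ _).symm
        have key : ∀ b : Bool,
            ∑ c ∈ F.filter (fun c => c.head? = some b), pstr p c ≤
              (if b then p else 1 - p) := by
          intro b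
          have hcons : ∀ c ∈ F.filter (fun c => c.head? = some b), c = b :: c.tail := by
            intro c hc
            rcases Finset.mem_filter.1 hc with ⟨hcF, hhd⟩
            cases c with
            | nil => simp at hhd
            | cons x t => simp at hhd; simp [hhd]
          have h1 : ∑ c ∈ F.filter (fun c => c.head? = some b), pstr p c =
              (if b then p else 1 - p) *
              ∑ c ∈ F.filter (fun c => c.head? = some b), pstr p c.tail := by
            rw [Finset.mul_sum]
            apply Finset.sum_congr rfl
            intro c hc
            conv_lhs => rw [hcons c hc]
            rw [pstr_cons]
          rw [h1]
          have h2 : ∑ c ∈ F.filter (fun c => c.head? = some b), pstr p c.tail =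
              ∑ t ∈ (F.filter (fun c => c.head? = some b)).image List.tail, pstr p t := by
            rw [Finset.sum_image]
            intro c hc d hd htl
            rw [hcons c hc, hcons d hd, htl]
          rw [h2]
          have h3 : ∑ t ∈ (F.filter (fun c => c.head? = some b)).image List.tail,
              pstr p t ≤ 1 := by
            apply ih
            · intro t ht s hs hpre
              rcases Finset.mem_image.1 ht with ⟨c, hc, rfl⟩
              rcases Finset.mem_image.1 hs with ⟨d, hd, rfl⟩
              have hcd : c <+: d := by
                rw [hcons c hc, hcons d hd]
                exact List.cons_prefix_cons.2 ⟨rfl, hpre⟩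
              rw [hpf c (Finset.mem_filter.1 hc).1 d (Finset.mem_filter.1 hd).1 hcd]
            · intro t ht
              rcases Finset.mem_image.1 ht with ⟨c, hc, rfl⟩
              have := hlen c (Finset.mem_filter.1 hc).1
              have hne : c ≠ [] := fun h => hnil (h ▸ (Finset.mem_filter.1 hc).1)
              cases c with
              | nil => simp at hne
              | cons x t' => simp at this ⊢; omega
          have hb : (0:ℝ) ≤ (if b then p else 1 - p) := by
            cases b <;> simp <;> linarith
          calc (if b then p else 1 - p) * _ ≤ (if b then p else 1 - p) * 1 :=
                mul_le_mul_of_nonneg_left h3 hb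
            _ = _ := mul_one _
        have hfeq : F.filter (fun c => ¬ (c.head? = some false)) =
            F.filter (fun c => c.head? = some true) := by
          apply Finset.filter_congr
          intro c hc
          have hne : c ≠ [] := fun h => hnil (h ▸ hc)
          cases c with
          | nil => simp at hne
          | cons x t => cases x <;> simp
        rw [hsplit, hfeq]
        have h0 := key false
        have h1 := key true
        norm_num at h0 h1
        linarith

lemma logsum {α : Type*} (s : Finset α) (a b : α → ℝ)
    (ha : ∀ i ∈ s, 0 < a i) (hb : ∀ i ∈ s, 0 < b i)
    (Q : ℝ) (hQ0 : 0 < Q) (hQ : ∑ i ∈ s, b i ≤ Q)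
    (hA : 0 < ∑ i ∈ s, a i) :
    (∑ i ∈ s, a i) * Real.log ((∑ i ∈ s, a i) / Q) ≤
      ∑ i ∈ s, a i * Real.log (a i / b i) := by
  set A := ∑ i ∈ s, a i with hAdef
  have key : ∀ i ∈ s, a i * Real.log (A / Q) + (a i - b i * (A / Q)) ≤
      a i * Real.log (a i / b i) := by
    intro i hi
    have hai := ha i hi
    have hbi := hb i hi
    have hx : (0:ℝ) < a i / b i := div_pos hai hbi
    have hy : (0:ℝ) < A / Q := div_pos hA hQ0
    have hlog : Real.log ((A / Q) / (a i / b i)) ≤ (A / Q) / (a i / b i) - 1 :=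
      Real.log_le_sub_one_of_pos (div_pos hy hx)
    rw [Real.log_div (ne_of_gt hy) (ne_of_gt hx)] at hlog
    have h2 : a i * (Real.log (A/Q) - Real.log (a i / b i)) ≤
        a i * ((A / Q) / (a i / b i) - 1) := mul_le_mul_of_nonneg_left hlog hai.le
    have h3 : a i * ((A / Q) / (a i / b i) - 1) = b i * (A/Q) - a i := by
      field_simp
    nlinarith [h2, h3]
  have hsum := Finset.sum_le_sum key
  rw [Finset.sum_add_distrib, ← Finset.sum_mul, Finset.sum_sub_distrib,
    ← Finset.sum_mul] at hsum
  have : A ≤ A := le_refl A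
  have hfinal : (∑ i ∈ s, b i) * (A / Q) ≤ Q * (A/Q) :=
    mul_le_mul_of_nonneg_right hQ (le_of_lt (div_pos hA hQ0))
  have hQA : Q * (A/Q) = A := by field_simp
  nlinarith [hsum, hfinal]
open Classical in
/-- **Overflow part of Proposition 3; inequality (28).** Let `P_Y` be a binary
target distribution (`P_Y(1) = p`, `0 < p < 1`), let `E` be a finite prefix-free
set of binary strings each of length strictly greater than `n`, and let
`w : E → (0,∞)` be weights.  With `W` as above,
`Σ_{v ∈ {0,1}^n : W(v) > 0} W(v) log₂(W(v)/P_Y^n(v))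
  ≤ Σ_{c ∈ E} w(c) log₂(w(c)/P_Y^{ℓ(c)}(c))`. -/
theorem overflow_divergence_le (p : ℝ) (hp0 : 0 < p) (hp1 : p < 1) (n : ℕ)
    (E : Finset (List Bool))
    (hpf : ∀ c ∈ E, ∀ d ∈ E, c <+: d → c = d)
    (hlen : ∀ c ∈ E, n < c.length)
    (w : List Bool → ℝ) (hw : ∀ c ∈ E, 0 < w c) :
    ∑ v ∈ Finset.univ.filter (fun v : Fin n → Bool => 0 < overW n E w v),
        overW n E w v *
          Real.logb 2 (overW n E w v / pstr p (List.ofFn v)) ≤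
      ∑ c ∈ E, w c * Real.logb 2 (w c / pstr p c) := by
  classical
  -- Step 1: remove the filter on the LHS
  have hW0 : ∀ v : Fin n → Bool, 0 ≤ overW n E w v := by
    intro v
    apply Finset.sum_nonneg
    intro c hc
    split <;> [exact (hw c hc).le; exact le_refl 0]
  have hLHS : ∑ v ∈ Finset.univ.filter (fun v : Fin n → Bool => 0 < overW n E w v),
        overW n E w v * Real.logb 2 (overW n E w v / pstr p (List.ofFn v)) =
      ∑ v : Fin n → Bool,
        overW n E w v * Real.logb 2 (overW n E w v / pstr p (List.ofFn v)) := by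
    apply Finset.sum_filter_of_ne
    intro v _ hne
    rcases lt_or_eq_of_le (hW0 v) with h | h
    · exact h
    · exact absurd (by rw [← h, zero_mul]) hne
  rw [hLHS]
  -- Step 2: rewrite the RHS as a double sum over fibers
  have hfib : ∑ c ∈ E, w c * Real.logb 2 (w c / pstr p c) =
      ∑ v : Fin n → Bool, ∑ c ∈ E, (if c.take n = List.ofFn v then
        w c * Real.logb 2 (w c / pstr p c) else 0) := by
    set f : List Bool → ℝ := fun c => w c * Real.logb 2 (w c / pstr p c) with hf
    rw [Finset.sum_comm]
    apply Finset.sum_congr rfl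
    intro c hc
    have hcn : n ≤ c.length := (hlen c hc).le
    set vc : Fin n → Bool := fun i => c.get ⟨i.val, lt_of_lt_of_le i.isLt hcn⟩ with hvc
    have hofn : List.ofFn vc = c.take n := by
      apply List.ext_getElem
      · simp [List.length_ofFn, List.length_take, Nat.min_eq_left hcn]
      · intro i h1 h2
        simp [List.getElem_ofFn, List.getElem_take, List.get_eq_getElem, hvc]
    have hcond : ∀ v : Fin n → Bool, (c.take n = List.ofFn v) ↔ (v = vc) := by
      intro v
      rw [← hofn]
      constructor
      · intro h
        exact (List.ofFn_injective h.symm)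
      · intro h; rw [h]
    calc f c = ∑ v : Fin n → Bool, (if v = vc then f c else 0) := by
            rw [Finset.sum_ite_eq' Finset.univ vc (fun _ => f c)]
            simp
      _ = ∑ v : Fin n → Bool, (if c.take n = List.ofFn v then f c else 0) := by
            apply Finset.sum_congr rfl
            intro v _
            rw [if_congr (hcond v) rfl rfl]
  rw [hfib]
  -- Step 3: termwise comparison
  apply Finset.sum_le_sum
  intro v _
  set s : Finset (List Bool) := E.filter (fun c => c.take n = List.ofFn v) with hs
  have hWs : overW n E w v = ∑ c ∈ s, w c := by
    rw [hs, Finset.sum_filter]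
    rfl
  have hRs : ∑ c ∈ E, (if c.take n = List.ofFn v then
      w c * Real.logb 2 (w c / pstr p c) else 0) =
      ∑ c ∈ s, w c * Real.logb 2 (w c / pstr p c) := by
    rw [hs, Finset.sum_filter]
  rw [hWs, hRs]
  by_cases hpos : 0 < ∑ c ∈ s, w c
  · -- the log-sum inequality together with Kraft
    have hsE : ∀ c ∈ s, c ∈ E := fun c hc => (Finset.mem_filter.1 hc).1
    have hsv : ∀ c ∈ s, c.take n = List.ofFn v :=
      fun c hc => by simpa using (Finset.mem_filter.1 hc).2
    have hQ0 : 0 < pstr p (List.ofFn v) := pstr_pos p hp0 hp1 _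
    -- Kraft bound on the fiber
    have hb_le : ∑ c ∈ s, pstr p c ≤ pstr p (List.ofFn v) := by
      have hdec : ∀ c ∈ s, pstr p c = pstr p (List.ofFn v) * pstr p (c.drop n) := by
        intro c hc
        conv_lhs => rw [← List.take_append_drop n c]
        rw [pstr_append, hsv c hc]
      rw [Finset.sum_congr rfl hdec, ← Finset.mul_sum]
      have himg : ∑ c ∈ s, pstr p (c.drop n) =
          ∑ t ∈ s.image (List.drop n), pstr p t := by
        rw [Finset.sum_image]
        intro c hc d hd hdp
        have : List.take n c ++ List.drop n c = List.take n d ++ List.drop n d := by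
          rw [hsv c hc, hsv d hd, hdp]
        simpa [List.take_append_drop] using this
      have hkraft : ∑ t ∈ s.image (List.drop n), pstr p t ≤ 1 := by
        apply kraft p hp0 hp1 ((s.image (List.drop n)).sup List.length)
        · intro t ht u hu hpre
          rcases Finset.mem_image.1 ht with ⟨c, hc, rfl⟩
          rcases Finset.mem_image.1 hu with ⟨d, hd, rfl⟩
          have hcd : c <+: d := by
            conv_lhs => rw [← List.take_append_drop n c]
            conv_rhs => rw [← List.take_append_drop n d]
            rw [hsv c hc, hsv d hd]
            exact (List.prefix_append_right_inj _).2 hpre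
          rw [hpf c (hsE c hc) d (hsE d hd) hcd]
        · intro t ht
          exact Finset.le_sup ht
      calc pstr p (List.ofFn v) * ∑ c ∈ s, pstr p (c.drop n)
          = pstr p (List.ofFn v) * ∑ t ∈ s.image (List.drop n), pstr p t := by
            rw [himg]
        _ ≤ pstr p (List.ofFn v) * 1 := mul_le_mul_of_nonneg_left hkraft hQ0.le
        _ = pstr p (List.ofFn v) := mul_one _
    have hmain := logsum s w (pstr p) (fun c hc => hw c (hsE c hc))
      (fun c hc => pstr_pos p hp0 hp1 c) (pstr p (List.ofFn v)) hQ0 hb_le hpos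
    -- convert to logb
    have hlog2 : (0:ℝ) < Real.log 2 := Real.log_pos one_lt_two
    simp only [Real.logb, div_eq_mul_inv, ← mul_assoc]
    rw [← Finset.sum_mul]
    apply mul_le_mul_of_nonneg_right _ (by positivity)
    simpa [div_eq_mul_inv] using hmain
  · -- empty fiber
    have hse : s = ∅ := by
      by_contra hne
      rcases Finset.nonempty_iff_ne_empty.2 hne with ⟨c, hc⟩
      have : w c ≤ ∑ c ∈ s, w c :=
        Finset.single_le_sum (fun d hd => (hw d ((Finset.mem_filter.1 hd).1)).le) hc
      exact hpos (lt_of_lt_of_le (hw c (Finset.mem_filter.1 hc).1) this)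
    simp [hse]
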